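/- arXiv:1606.01793 — 2 statements merged into one kernel-verified Lean document; each statement's English description precedes it below -/
import Mathlib

section
/- The truncated Frobenius function Y ↦ sqrt(Σ_{i=1}^r σᵢ(Y)²) (sum over the r largest singular values) is a norm on real n×m matrices. -/
open Matrix BigOperators Finset

/-- Singular values of a real `n × m` matrix, in nonincreasing order, 0-indexed:
`sv M 0 ≥ sv M 1 ≥ …` are the singular values (square roots of the eigenvalues of `Mᵀ M`). -/
noncomputable def sv {n m : ℕ} (M : Matrix (Fin n) (Fin m) ℝ) (i : ℕ) : ℝ :=
  (((List.ofFn fun j : Fin m =>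
      Real.sqrt (((by rw [← Matrix.conjTranspose_eq_transpose_of_trivial]; exact Matrix.isHermitian_conjTranspose_mul_self M : (Mᵀ * M).IsHermitian)).eigenvalues j)).mergeSort
      (fun a b => decide (a ≥ b))).getD i 0)

/-- Trace inner product `⟨M, Y⟩ = tr (Mᵀ Y)`. -/
def ip {n m : ℕ} (M Y : Matrix (Fin n) (Fin m) ℝ) : ℝ := ∑ i, ∑ j, M i j * Y i j

/-- Frobenius norm. -/
noncomputable def fro {n m : ℕ} (M : Matrix (Fin n) (Fin m) ℝ) : ℝ :=
  Real.sqrt (∑ i, ∑ j, M i j ^ 2)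

/-- Truncated Frobenius norm `‖M‖_{F,r} = sqrt (σ₁² + ⋯ + σᵣ²)`. -/
noncomputable def truncFro {n m : ℕ} (r : ℕ) (M : Matrix (Fin n) (Fin m) ℝ) : ℝ :=
  Real.sqrt (∑ i ∈ Finset.range r, sv M i ^ 2)

/-- Dual norm with respect to the trace inner product. -/
noncomputable def dualNorm {n m : ℕ} (ν : Matrix (Fin n) (Fin m) ℝ → ℝ)
    (M : Matrix (Fin n) (Fin m) ℝ) : ℝ :=
  sSup {c : ℝ | ∃ Y, ν Y ≤ 1 ∧ c = ip M Y}

/-- Low-rank inducing Frobenius norm `‖·‖_{F,r*}`, the dual of `‖·‖_{F,r}`. -/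
noncomputable def lowRankFro {n m : ℕ} (r : ℕ) (M : Matrix (Fin n) (Fin m) ℝ) : ℝ :=
  dualNorm (truncFro r) M

/-- Ky Fan `r`-norm: sum of the `r` largest singular values. -/
noncomputable def kyFan {n m : ℕ} (r : ℕ) (M : Matrix (Fin n) (Fin m) ℝ) : ℝ :=
  ∑ i ∈ Finset.range r, sv M i

/-- Nuclear norm: sum of all singular values. -/
noncomputable def nuclear {n m : ℕ} (M : Matrix (Fin n) (Fin m) ℝ) : ℝ :=
  ∑ i ∈ Finset.range (min n m), sv M i

/-!
For `V` with `r` orthonormal columns, write `W = Uᵀ V` where `U` is an orthogonal matrix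
diagonalising `MᵀM = U diag(λ) Uᵀ`. Then `‖M V‖_F² = ∑ₖ λₖ cₖ` with weights `cₖ = ∑_q W_kq²`
in `[0, 1]` summing to `r`, and such a weighted sum is at most the sum of the `r` largest `λₖ`,
i.e. `σ₁² + ⋯ + σᵣ²`; equality holds when the columns of `V` are eigenvectors for those
eigenvalues. So `truncFro r` is the pointwise maximum of the seminorms `M ↦ ‖M V‖_F`, which makes
it absolutely homogeneous and subadditive. It is definite because `σ₁ = 0` forces every singular
value, hence `‖M‖_F`, to vanish.
-/

theorem List.mergeSort_ge_ofFn {α : Type*} [LinearOrder α] {m : ℕ} (f : Fin m → α)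
    {σ : Equiv.Perm (Fin m)} (hσ : Antitone (f ∘ σ)) :
    (List.ofFn f).mergeSort (fun a b => decide (a ≥ b)) = List.ofFn (f ∘ σ) :=
  ((List.mergeSort_perm _ _).trans (σ.ofFn_comp_perm f).symm).eq_of_pairwise'
    List.sortedGE_mergeSort.pairwise hσ.sortedGE_ofFn.pairwise

theorem Tuple.exists_perm_antitone {α : Type*} [LinearOrder α] {m : ℕ} (f : Fin m → α) :
    ∃ σ : Equiv.Perm (Fin m), Antitone (f ∘ σ) :=
  ⟨Tuple.sort (OrderDual.toDual ∘ f), monotone_toDual_comp_iff.mp (Tuple.monotone_sort _)⟩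

theorem Finset.sum_mul_le_sum_range_of_antitone {m r : ℕ} (hrm : r ≤ m) {t : ℕ → ℝ}
    (ht : Antitone t) {c : Fin m → ℝ} (hc0 : ∀ k, 0 ≤ c k) (hc1 : ∀ k, c k ≤ 1)
    (hc : ∑ k, c k = r) :
    ∑ k : Fin m, t k * c k ≤ ∑ i ∈ range r, t i := by
  have hpoint : ∀ k : Fin m, (t k - t r) * c k ≤ if (k : ℕ) < r then t k - t r else 0 := by
    intro k
    split_ifs with hk
    · exact mul_le_of_le_one_right (sub_nonneg.mpr (ht hk.le)) (hc1 k)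
    · exact mul_nonpos_of_nonpos_of_nonneg (sub_nonpos.mpr (ht (not_lt.mp hk))) (hc0 k)
  have htop :
      ∑ k : Fin m, (if (k : ℕ) < r then t k - t r else 0) = ∑ i ∈ range r, (t i - t r) := by
    have hfilter : (range m).filter (· < r) = range r := by ext; simp; omega
    rw [Fin.sum_univ_eq_sum_range (fun i => if i < r then t i - t r else 0), ← sum_filter,
      hfilter]
  have := (sum_le_sum fun k _ => hpoint k).trans htop.le
  simp only [sub_mul, sum_sub_distrib, ← mul_sum, hc, sum_const, card_range, nsmul_eq_mul] at this
  linarith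

namespace Matrix

theorem sum_sq_le_one_of_transpose_mul_self_eq_one {ι κ : Type*} [Fintype ι] [Fintype κ]
    [DecidableEq ι] [DecidableEq κ] {W : Matrix ι κ ℝ} (hW : Wᵀ * W = 1) (k : ι) :
    ∑ q, W k q ^ 2 ≤ 1 := by
  set P := 1 - W * Wᵀ
  have hP : Pᵀ * P = P := by
    have hWW : W * Wᵀ * (W * Wᵀ) = W * Wᵀ := by
      rw [Matrix.mul_assoc, ← Matrix.mul_assoc Wᵀ, hW, Matrix.one_mul]
    simp only [P, transpose_sub, transpose_one, transpose_mul, transpose_transpose,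
      Matrix.sub_mul, Matrix.mul_sub, Matrix.one_mul, Matrix.mul_one, hWW]
    abel
  have hdiag : 0 ≤ P k k := by
    rw [← hP, mul_apply]
    exact sum_nonneg fun i _ => by rw [transpose_apply]; exact mul_self_nonneg _
  simpa [P, mul_apply, sq] using hdiag

theorem sum_sum_sq_eq_trace_transpose_mul_self {ι κ : Type*} [Fintype ι] [Fintype κ]
    (W : Matrix ι κ ℝ) : ∑ i, ∑ j, W i j ^ 2 = (Wᵀ * W).trace := by
  rw [Finset.sum_comm]
  simp [trace, mul_apply, sq]

theorem trace_transpose_mul_diagonal_mul {ι κ : Type*} [Fintype ι] [Fintype κ] [DecidableEq ι]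
    (W : Matrix ι κ ℝ) (d : ι → ℝ) :
    (Wᵀ * diagonal d * W).trace = ∑ k, d k * ∑ q, W k q ^ 2 := by
  simp only [trace, diag, mul_apply, transpose_apply, diagonal, of_apply, Finset.mul_sum]
  rw [Finset.sum_comm]
  simp [sq, mul_left_comm, mul_comm]

theorem isHermitian_transpose_mul_self {ι κ : Type*} [Fintype ι] (M : Matrix ι κ ℝ) :
    (Mᵀ * M).IsHermitian := by
  simpa using isHermitian_conjTranspose_mul_self M

namespace IsHermitian

variable {ι : Type*} [Fintype ι] [DecidableEq ι] {A : Matrix ι ι ℝ} (hA : A.IsHermitian)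

theorem transpose_eigenvectorUnitary_mul_self :
    (hA.eigenvectorUnitary : Matrix ι ι ℝ)ᵀ * hA.eigenvectorUnitary = 1 := by
  simpa [star_eq_conjTranspose] using Unitary.coe_star_mul_self hA.eigenvectorUnitary

theorem eigenvectorUnitary_mul_transpose_self :
    (hA.eigenvectorUnitary : Matrix ι ι ℝ) * (hA.eigenvectorUnitary : Matrix ι ι ℝ)ᵀ = 1 := by
  simpa [star_eq_conjTranspose] using Unitary.coe_mul_star_self hA.eigenvectorUnitary

theorem transpose_eigenvectorUnitary_mul_mul_eigenvectorUnitary :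
    (hA.eigenvectorUnitary : Matrix ι ι ℝ)ᵀ * A * hA.eigenvectorUnitary =
      diagonal hA.eigenvalues := by
  simpa [Unitary.conjStarAlgAut_apply, star_eq_conjTranspose]
    using hA.conjStarAlgAut_star_eigenvectorUnitary

end IsHermitian

end Matrix

section Frobenius

attribute [local instance] Matrix.frobeniusNormedAddCommGroup Matrix.frobeniusNormedSpace

variable {n m : ℕ}

theorem fro_eq_norm (M : Matrix (Fin n) (Fin m) ℝ) : fro M = ‖M‖ := by
  simp [fro, frobenius_norm_def, Real.sqrt_eq_rpow]

theorem fro_add_le (M N : Matrix (Fin n) (Fin m) ℝ) : fro (M + N) ≤ fro M + fro N := by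
  simpa only [fro_eq_norm] using norm_add_le M N

theorem fro_smul (a : ℝ) (M : Matrix (Fin n) (Fin m) ℝ) : fro (a • M) = |a| * fro M := by
  simp only [fro_eq_norm, norm_smul, Real.norm_eq_abs]

theorem fro_eq_zero {M : Matrix (Fin n) (Fin m) ℝ} : fro M = 0 ↔ M = 0 := by
  rw [fro_eq_norm, norm_eq_zero]

theorem fro_nonneg (M : Matrix (Fin n) (Fin m) ℝ) : 0 ≤ fro M := Real.sqrt_nonneg _

end Frobenius

theorem sq_fro {n m : ℕ} (M : Matrix (Fin n) (Fin m) ℝ) : fro M ^ 2 = (Mᵀ * M).trace := by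
  rw [fro, Real.sq_sqrt (by positivity), Matrix.sum_sum_sq_eq_trace_transpose_mul_self]

section SingularValues

open Matrix

variable {n m : ℕ} (M : Matrix (Fin n) (Fin m) ℝ)

theorem eigenvalues_transpose_mul_self_nonneg (k : Fin m) :
    0 ≤ (isHermitian_transpose_mul_self M).eigenvalues k := by
  have hM : (Mᵀ * M).PosSemidef := by
    simpa using posSemidef_conjTranspose_mul_self M
  exact hM.eigenvalues_nonneg k

theorem exists_perm_sv_eq : ∃ σ : Equiv.Perm (Fin m),
    Antitone (fun k => √((isHermitian_transpose_mul_self M).eigenvalues (σ k))) ∧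
    ∀ i, sv M i = if h : i < m then √((isHermitian_transpose_mul_self M).eigenvalues (σ ⟨i, h⟩))
      else 0 := by
  obtain ⟨σ, hσ⟩ :=
    Tuple.exists_perm_antitone fun k => √((isHermitian_transpose_mul_self M).eigenvalues k)
  refine ⟨σ, hσ, fun i => ?_⟩
  rw [sv, List.mergeSort_ge_ofFn _ hσ]
  split_ifs with h
  · simp [h]
  · simp [not_lt.mp h]

theorem sv_eq_zero_of_le {i : ℕ} (hi : m ≤ i) : sv M i = 0 := by
  obtain ⟨σ, -, hsv⟩ := exists_perm_sv_eq M
  rw [hsv, dif_neg (not_lt.mpr hi)]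

theorem sv_nonneg (i : ℕ) : 0 ≤ sv M i := by
  obtain ⟨σ, -, hsv⟩ := exists_perm_sv_eq M
  rw [hsv]
  split_ifs
  exacts [Real.sqrt_nonneg _, le_rfl]

theorem sv_antitone : Antitone (sv M) := by
  intro i j hij
  obtain ⟨σ, hσ, hsv⟩ := exists_perm_sv_eq M
  by_cases hj : j < m
  · rw [hsv, hsv, dif_pos hj, dif_pos (hij.trans_lt hj)]
    exact hσ (Fin.mk_le_mk.mpr hij)
  · rw [sv_eq_zero_of_le M (not_lt.mp hj)]
    exact sv_nonneg M i

theorem exists_perm_sq_sv_eq : ∃ σ : Equiv.Perm (Fin m),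
    ∀ k : Fin m, sv M k ^ 2 = (isHermitian_transpose_mul_self M).eigenvalues (σ k) := by
  obtain ⟨σ, -, hsv⟩ := exists_perm_sv_eq M
  exact ⟨σ, fun k => by
    rw [hsv, dif_pos k.isLt, Real.sq_sqrt (eigenvalues_transpose_mul_self_nonneg M _)]⟩

theorem sum_range_sq_sv : ∑ i ∈ Finset.range m, sv M i ^ 2 = fro M ^ 2 := by
  obtain ⟨σ, hσ⟩ := exists_perm_sq_sv_eq M
  rw [Finset.sum_range (fun i => sv M i ^ 2), sq_fro,
    (isHermitian_transpose_mul_self M).trace_eq_sum_eigenvalues]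
  simp only [hσ, RCLike.ofReal_real_eq_id, id]
  exact Equiv.sum_comp σ (isHermitian_transpose_mul_self M).eigenvalues

theorem sv_eq_zero_iff : (∀ i, sv M i = 0) ↔ M = 0 := by
  rw [← fro_eq_zero, ← pow_eq_zero_iff two_ne_zero, ← sum_range_sq_sv,
    Finset.sum_eq_zero_iff_of_nonneg fun i _ => sq_nonneg _]
  constructor
  · intro h i _
    rw [h i, sq, zero_mul]
  · intro h i
    by_cases hi : i < m
    · exact pow_eq_zero_iff two_ne_zero |>.mp (h i (Finset.mem_range.mpr hi))
    · exact sv_eq_zero_of_le M (not_lt.mp hi)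

end SingularValues

section Variational

open Matrix

variable {n m r : ℕ} (M : Matrix (Fin n) (Fin m) ℝ)

theorem fro_mul_le_truncFro (hrm : r ≤ m) {V : Matrix (Fin m) (Fin r) ℝ} (hV : Vᵀ * V = 1) :
    fro (M * V) ≤ truncFro r M := by
  set hA := isHermitian_transpose_mul_self M
  set U : Matrix (Fin m) (Fin m) ℝ := ↑hA.eigenvectorUnitary
  set W := Uᵀ * V
  have hW : Wᵀ * W = 1 := by
    simp only [W, transpose_mul, transpose_transpose, Matrix.mul_assoc, ← Matrix.mul_assoc U,
      U, hA.eigenvectorUnitary_mul_transpose_self, Matrix.one_mul, hV]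
  have hfro : fro (M * V) ^ 2 = ∑ k, hA.eigenvalues k * ∑ q, W k q ^ 2 := by
    rw [sq_fro, ← trace_transpose_mul_diagonal_mul]
    congr 1
    calc (M * V)ᵀ * (M * V) = Vᵀ * (Mᵀ * M) * V := by simp only [transpose_mul, Matrix.mul_assoc]
      _ = Wᵀ * (Uᵀ * (Mᵀ * M) * U) * W := by
        have hUUt : U * Uᵀ = 1 := hA.eigenvectorUnitary_mul_transpose_self
        simp only [W, transpose_mul, transpose_transpose, ← Matrix.mul_assoc]
        rw [Matrix.mul_assoc Vᵀ U, hUUt, Matrix.mul_one, Matrix.mul_assoc (Vᵀ * Mᵀ * M) U, hUUt,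
          Matrix.mul_one]
      _ = Wᵀ * diagonal hA.eigenvalues * W := by
        rw [hA.transpose_eigenvectorUnitary_mul_mul_eigenvectorUnitary]
  obtain ⟨σ, hσ⟩ := exists_perm_sq_sv_eq M
  have hsq_anti : Antitone fun i => sv M i ^ 2 :=
    fun i j hij => pow_le_pow_left₀ (sv_nonneg M j) (sv_antitone M hij) 2
  refine (Real.le_sqrt (fro_nonneg _) (by positivity)).mpr ?_
  rw [hfro, ← Equiv.sum_comp σ]
  simp only [← hσ]
  refine Finset.sum_mul_le_sum_range_of_antitone hrm hsq_anti (fun k => by positivity)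
    (fun k => sum_sq_le_one_of_transpose_mul_self_eq_one hW _) ?_
  rw [Equiv.sum_comp σ (fun k => ∑ q, W k q ^ 2), sum_sum_sq_eq_trace_transpose_mul_self, hW]
  simp

theorem exists_fro_mul_eq_truncFro (hrm : r ≤ m) :
    ∃ V : Matrix (Fin m) (Fin r) ℝ, Vᵀ * V = 1 ∧ fro (M * V) = truncFro r M := by
  set hA := isHermitian_transpose_mul_self M
  set U : Matrix (Fin m) (Fin m) ℝ := ↑hA.eigenvectorUnitary
  obtain ⟨σ, hσ⟩ := exists_perm_sq_sv_eq M
  let e : Fin r ↪ Fin m := (Fin.castLEEmb hrm).trans σ.toEmbedding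
  have hconj : ∀ B : Matrix (Fin m) (Fin m) ℝ,
      (U.submatrix id e)ᵀ * B * U.submatrix id e = (Uᵀ * B * U).submatrix e e := by
    intro B
    rw [transpose_submatrix, submatrix_mul _ _ _ id _ Function.bijective_id,
      submatrix_mul _ _ _ id _ Function.bijective_id]
    rfl
  refine ⟨U.submatrix id e,
    by simpa [U, hA.transpose_eigenvectorUnitary_mul_self] using hconj 1, ?_⟩
  have hsq : fro (M * U.submatrix id e) ^ 2 = ∑ i ∈ Finset.range r, sv M i ^ 2 := by
    rw [sq_fro, transpose_mul, Matrix.mul_assoc, ← Matrix.mul_assoc Mᵀ, ← Matrix.mul_assoc, hconj,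
      hA.transpose_eigenvectorUnitary_mul_mul_eigenvectorUnitary, submatrix_diagonal_embedding,
      trace_diagonal, Finset.sum_range]
    simp [e, ← hσ]
  rw [truncFro, ← hsq, Real.sqrt_sq (fro_nonneg _)]

end Variational

section TruncatedFrobenius

variable {n m r : ℕ}

theorem truncFro_smul (hrm : r ≤ m) (a : ℝ) (M : Matrix (Fin n) (Fin m) ℝ) :
    truncFro r (a • M) = |a| * truncFro r M := by
  obtain ⟨V, hV, haMV⟩ := exists_fro_mul_eq_truncFro (a • M) hrm
  obtain ⟨W, hW, hMW⟩ := exists_fro_mul_eq_truncFro M hrm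
  apply le_antisymm
  · calc truncFro r (a • M) = |a| * fro (M * V) := by rw [← haMV, smul_mul, fro_smul]
      _ ≤ |a| * truncFro r M := by gcongr; exact fro_mul_le_truncFro M hrm hV
  · calc |a| * truncFro r M = fro ((a • M) * W) := by rw [smul_mul, fro_smul, hMW]
      _ ≤ truncFro r (a • M) := fro_mul_le_truncFro _ hrm hW

theorem truncFro_add_le (hrm : r ≤ m) (M N : Matrix (Fin n) (Fin m) ℝ) :
    truncFro r (M + N) ≤ truncFro r M + truncFro r N := by
  obtain ⟨V, hV, hMNV⟩ := exists_fro_mul_eq_truncFro (M + N) hrm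
  calc truncFro r (M + N) = fro (M * V + N * V) := by rw [← hMNV, Matrix.add_mul]
    _ ≤ fro (M * V) + fro (N * V) := fro_add_le _ _
    _ ≤ truncFro r M + truncFro r N :=
      add_le_add (fro_mul_le_truncFro M hrm hV) (fro_mul_le_truncFro N hrm hV)

theorem truncFro_eq_zero_iff (hr : 0 < r) (M : Matrix (Fin n) (Fin m) ℝ) :
    truncFro r M = 0 ↔ M = 0 := by
  rw [← sv_eq_zero_iff, truncFro, Real.sqrt_eq_zero (by positivity),
    Finset.sum_eq_zero_iff_of_nonneg fun i _ => sq_nonneg _]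
  simp only [Finset.mem_range, pow_eq_zero_iff two_ne_zero]
  refine ⟨fun h i => le_antisymm ?_ (sv_nonneg M i), fun h i _ => h i⟩
  exact (sv_antitone M i.zero_le).trans_eq (h 0 hr)

end TruncatedFrobenius

/-- the truncated Frobenius function `Y ↦ sqrt (Σ_{i=1}^r σᵢ(Y)²)` is a norm. -/
theorem truncFro_is_norm {n m r : ℕ} (hr1 : 1 ≤ r) (hr2 : r ≤ min n m) :
    (∀ M : Matrix (Fin n) (Fin m) ℝ, 0 ≤ truncFro r M) ∧
    (∀ M : Matrix (Fin n) (Fin m) ℝ, truncFro r M = 0 ↔ M = 0) ∧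
    (∀ (a : ℝ) (M : Matrix (Fin n) (Fin m) ℝ), truncFro r (a • M) = |a| * truncFro r M) ∧
    (∀ M N : Matrix (Fin n) (Fin m) ℝ, truncFro r (M + N) ≤ truncFro r M + truncFro r N) := by
  have hrm : r ≤ m := hr2.trans (min_le_right n m)
  exact ⟨fun M => Real.sqrt_nonneg _, truncFro_eq_zero_iff hr1, truncFro_smul hrm,
    truncFro_add_le hrm⟩
end

section
/- For vectors x ∈ ℝⁿ, the dual norm of the ℓ²-norm of the r largest-magnitude entries, i.e., of x ↦ sqrt(Σ_{i=1}^r |x|_{[i]}²) where |x|_{[1]} ≥ … ≥ |x|_{[n]} are the sorted absolute values, equals the k-support norm with k = r, namely ‖x‖ₖ^{sp} = inf { Σ_g ‖v_g‖₂ : Σ_g v_g = x, each v_g has at most k nonzero entries }. -/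
/-! Cauchy–Schwarz on the support of an `r`-sparse vector `v` gives `⟨v, y⟩ ≤ ‖v‖₂ · topEll2 r y`,
and summing over a decomposition gives `dual ≤ ksup`. Conversely, `topEll2 r y` is attained by an
`r`-sparse unit vector, so it is the support function of the `r`-sparse unit vectors. The ball of
radius `s` of the `k`-support norm is the convex hull of `s` times these vectors; it is compact, so
if `ksup r x > s` then Hahn–Banach separates `x` from it by some `y` with `topEll2 r y ≤ 1` and
`⟨x, y⟩ > s`. -/

open BigOperators Finset

/-- The absolute values of the entries of `x ∈ ℝⁿ`, sorted in nonincreasing order,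
0-indexed: `svVec x 0 = |x|_[1] ≥ svVec x 1 = |x|_[2] ≥ …`. -/
noncomputable def svVec {n : ℕ} (x : Fin n → ℝ) (i : ℕ) : ℝ :=
  (((List.ofFn fun j : Fin n => |x j|).mergeSort (fun a b => decide (a ≥ b))).getD i 0)

/-- The `top-r ℓ²` norm: the ℓ² norm of the `r` largest-magnitude entries. -/
noncomputable def topEll2 {n : ℕ} (r : ℕ) (x : Fin n → ℝ) : ℝ :=
  Real.sqrt (∑ i ∈ Finset.range r, svVec x i ^ 2)

/-- Euclidean (ℓ²) norm on `ℝⁿ`. -/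
noncomputable def euclN {n : ℕ} (x : Fin n → ℝ) : ℝ := Real.sqrt (∑ i, x i ^ 2)

/-- ℓ¹ norm on `ℝⁿ`. -/
noncomputable def l1N {n : ℕ} (x : Fin n → ℝ) : ℝ := ∑ i, |x i|

/-- Number of nonzero entries of `x`. -/
noncomputable def suppCard {n : ℕ} (x : Fin n → ℝ) : ℕ :=
  (Finset.univ.filter fun i => x i ≠ 0).card

/-- The `k`-support norm: infimum of `Σ_g ‖v_g‖₂` over all finite decompositions
`x = Σ_g v_g` where each `v_g` has at most `k` nonzero entries. -/
noncomputable def ksup {n : ℕ} (k : ℕ) (x : Fin n → ℝ) : ℝ :=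
  sInf {c : ℝ | ∃ (N : ℕ) (v : Fin N → (Fin n → ℝ)),
    (∀ g, suppCard (v g) ≤ k) ∧ (∑ g, v g) = x ∧ c = ∑ g, euclN (v g)}

/-- Dual norm on `ℝⁿ` with respect to the standard inner product. -/
noncomputable def dualVec {n : ℕ} (ν : (Fin n → ℝ) → ℝ) (x : Fin n → ℝ) : ℝ :=
  sSup {c : ℝ | ∃ y, ν y ≤ 1 ∧ c = ∑ i, x i * y i}

theorem sum_le_sum_range_of_antitone {M : Type*} [AddCommMonoid M] [PartialOrder M]
    [IsOrderedAddMonoid M] {f : ℕ → M} (hf : Antitone f) (hf0 : ∀ i, 0 ≤ f i) {T : Finset ℕ}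
    {r : ℕ} (hT : #T ≤ r) : ∑ i ∈ T, f i ≤ ∑ i ∈ range r, f i := by
  have hcard : #(T \ range r) ≤ #(range r \ T) := by
    have h1 := card_sdiff_add_card_inter T (range r)
    have h2 := card_sdiff_add_card_inter (range r) T
    rw [inter_comm, card_range] at h2
    omega
  have htail : ∑ i ∈ T \ range r, f i ≤ ∑ i ∈ range r \ T, f i :=
    calc ∑ i ∈ T \ range r, f i ≤ #(T \ range r) • f r :=
          sum_le_card_nsmul _ _ _ fun i hi => hf (by simpa using (mem_sdiff.1 hi).2)
      _ ≤ #(range r \ T) • f r := nsmul_le_nsmul_left (hf0 r) hcard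
      _ ≤ ∑ i ∈ range r \ T, f i :=
          card_nsmul_le_sum _ _ _ fun i hi => hf (mem_range.1 (mem_sdiff.1 hi).1).le
  rw [← sum_inter_add_sum_sdiff T (range r), ← sum_inter_add_sum_sdiff (range r) T, inter_comm]
  exact add_le_add le_rfl htail

section SortedValues

variable {n : ℕ} (y : Fin n → ℝ)

theorem svVec_eq_abs_sort (i : Fin n) :
    svVec y i = |y (Tuple.sort (fun j => |y j|) i.rev)| := by
  set σ := Tuple.sort fun j => |y j|
  have hsorted : (List.ofFn fun i : Fin n => |y (σ i.rev)|).SortedGE :=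
    Antitone.sortedGE_ofFn fun i j hij =>
      Tuple.monotone_sort (fun j => |y j|) (Fin.rev_le_rev.2 hij)
  have hperm : (List.ofFn fun i : Fin n => |y (σ i.rev)|).Perm (List.ofFn fun j => |y j|) :=
    (Equiv.Perm.ofFn_comp_perm Fin.revPerm ((fun j => |y j|) ∘ σ)).trans
      (Equiv.Perm.ofFn_comp_perm σ _)
  rw [svVec, List.Perm.eq_of_sortedGE List.sortedGE_mergeSort hsorted
    ((List.mergeSort_perm _ _).trans hperm.symm)]
  simp

theorem svVec_eq_zero_of_le {m : ℕ} (hm : n ≤ m) : svVec y m = 0 :=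
  List.getD_eq_default _ _ (by simpa using hm)

theorem svVec_nonneg (m : ℕ) : 0 ≤ svVec y m := by
  rcases lt_or_ge m n with hm | hm
  · exact (svVec_eq_abs_sort y ⟨m, hm⟩).symm ▸ abs_nonneg _
  · exact (svVec_eq_zero_of_le y hm).symm.le

theorem antitone_svVec : Antitone (svVec y) := by
  intro i j hij
  rcases lt_or_ge j n with hj | hj
  · rw [show j = (⟨j, hj⟩ : Fin n) from rfl, show i = (⟨i, hij.trans_lt hj⟩ : Fin n) from rfl,
      svVec_eq_abs_sort, svVec_eq_abs_sort]
    exact Tuple.monotone_sort (fun j => |y j|) (Fin.rev_le_rev.2 (Fin.mk_le_mk.2 hij))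
  · exact (svVec_eq_zero_of_le y hj).trans_le (svVec_nonneg y i)

theorem svVec_sort_symm_rev (j : Fin n) :
    svVec y ((Tuple.sort fun j => |y j|).symm j).rev = |y j| := by
  rw [svVec_eq_abs_sort, Fin.rev_rev, Equiv.apply_symm_apply]

theorem topEll2_nonneg (r : ℕ) : 0 ≤ topEll2 r y := Real.sqrt_nonneg _

theorem topEll2_sq (r : ℕ) : topEll2 r y ^ 2 = ∑ i ∈ range r, svVec y i ^ 2 :=
  Real.sq_sqrt (sum_nonneg fun _ _ => sq_nonneg _)

theorem sum_sq_le_topEll2_sq {r : ℕ} {S : Finset (Fin n)} (hS : #S ≤ r) :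
    ∑ i ∈ S, y i ^ 2 ≤ topEll2 r y ^ 2 := by
  let σ := Tuple.sort fun j => |y j|
  let π : Fin n ↪ ℕ :=
    ⟨fun j => (σ.symm j).rev, Fin.val_injective.comp (Fin.rev_injective.comp σ.symm.injective)⟩
  have hsq : Antitone fun i => svVec y i ^ 2 := fun i j hij =>
    pow_le_pow_left₀ (svVec_nonneg y j) (antitone_svVec y hij) 2
  calc ∑ i ∈ S, y i ^ 2 = ∑ i ∈ S.map π, svVec y i ^ 2 := by
        rw [sum_map]
        exact sum_congr rfl fun j _ => by
          rw [Function.Embedding.coeFn_mk, svVec_sort_symm_rev, sq_abs]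
    _ ≤ topEll2 r y ^ 2 := by
        rw [topEll2_sq]
        exact sum_le_sum_range_of_antitone hsq (fun _ => sq_nonneg _) ((card_map π).trans_le hS)

theorem exists_sum_sq_eq_topEll2_sq {r : ℕ} (hr : r ≤ n) :
    ∃ S : Finset (Fin n), #S ≤ r ∧ ∑ i ∈ S, y i ^ 2 = topEll2 r y ^ 2 := by
  let π : Fin r ↪ Fin n :=
    ⟨fun i => Tuple.sort (fun j => |y j|) (Fin.castLE hr i).rev, fun a b h => by simpa using h⟩
  refine ⟨univ.map π, by simp, ?_⟩
  rw [sum_map, topEll2_sq, sum_range]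
  refine Fintype.sum_congr _ _ fun i => ?_
  rw [← Fin.val_castLE hr i, svVec_eq_abs_sort, sq_abs]
  rfl

end SortedValues

section EuclideanNorm

variable {n : ℕ}

theorem euclN_eq_norm (v : Fin n → ℝ) : euclN v = ‖WithLp.toLp 2 v‖ := by
  simp [euclN, EuclideanSpace.norm_eq, sq_abs]

theorem euclN_nonneg (v : Fin n → ℝ) : 0 ≤ euclN v := Real.sqrt_nonneg _

@[simp] theorem euclN_zero : euclN (0 : Fin n → ℝ) = 0 := by simp [euclN]

theorem euclN_add_le (v w : Fin n → ℝ) : euclN (v + w) ≤ euclN v + euclN w := by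
  simpa only [euclN_eq_norm, WithLp.toLp_add] using norm_add_le _ _

theorem euclN_smul (c : ℝ) (v : Fin n → ℝ) : euclN (c • v) = |c| * euclN v := by
  simp only [euclN_eq_norm, WithLp.toLp_smul, norm_smul, Real.norm_eq_abs]

theorem abs_le_euclN (v : Fin n → ℝ) (i : Fin n) : |v i| ≤ euclN v := by
  simpa [euclN_eq_norm] using PiLp.norm_apply_le (WithLp.toLp 2 v) i

theorem continuous_euclN : Continuous (euclN (n := n)) := by
  unfold euclN; fun_prop

end EuclideanNorm

theorem suppCard_le_card {n : ℕ} {v : Fin n → ℝ} {S : Finset (Fin n)}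
    (hv : ∀ i ∉ S, v i = 0) : suppCard v ≤ #S :=
  card_le_card fun i hi => by_contra fun hiS => (mem_filter.1 hi).2 (hv i hiS)

section SparseDuality

variable {n r : ℕ}

theorem dotProduct_le_euclN_mul_topEll2 {v : Fin n → ℝ} (hv : suppCard v ≤ r) (y : Fin n → ℝ) :
    v ⬝ᵥ y ≤ euclN v * topEll2 r y := by
  set S := univ.filter fun i => v i ≠ 0
  have hvS : √(∑ i ∈ S, v i ^ 2) ≤ euclN v :=
    Real.sqrt_le_sqrt (sum_le_univ_sum_of_nonneg fun _ => sq_nonneg _)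
  have hyS : √(∑ i ∈ S, y i ^ 2) ≤ topEll2 r y :=
    (Real.sqrt_le_sqrt (sum_sq_le_topEll2_sq y hv)).trans_eq (Real.sqrt_sq (topEll2_nonneg y r))
  calc v ⬝ᵥ y = ∑ i ∈ S, v i * y i := (sum_filter_of_ne fun i _ h => left_ne_zero_of_mul h).symm
    _ ≤ √(∑ i ∈ S, v i ^ 2) * √(∑ i ∈ S, y i ^ 2) := Real.sum_mul_le_sqrt_mul_sqrt _ _ _
    _ ≤ euclN v * topEll2 r y := mul_le_mul hvS hyS (Real.sqrt_nonneg _) (euclN_nonneg v)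

theorem exists_dotProduct_eq_topEll2 (hr : r ≤ n) (z : Fin n → ℝ) :
    ∃ v, suppCard v ≤ r ∧ euclN v ≤ 1 ∧ v ⬝ᵥ z = topEll2 r z := by
  obtain ⟨S, hS, hSz⟩ := exists_sum_sq_eq_topEll2_sq z hr
  set t := topEll2 r z
  have ht0 : 0 ≤ t := topEll2_nonneg z r
  rcases eq_or_ne t 0 with ht | ht
  · exact ⟨0, by simp [suppCard], by simp, by simp [ht]⟩
  let w : Fin n → ℝ := fun i => if i ∈ S then z i else 0
  have hw : euclN w = t := by
    rw [euclN, ← Real.sqrt_sq ht0, ← hSz]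
    simp [w, ite_pow]
  have hwz : w ⬝ᵥ z = t ^ 2 := by
    simp [dotProduct, w, ite_mul, ← hSz, sq]
  refine ⟨t⁻¹ • w, (suppCard_le_card fun i hi => by simp [w, hi]).trans hS, ?_, ?_⟩
  · rw [euclN_smul, hw, abs_inv, abs_of_nonneg ht0, inv_mul_cancel₀ ht]
  · rw [smul_dotProduct, hwz, smul_eq_mul]
    field_simp

theorem dotProduct_le_sum_euclN {N : ℕ} {v : Fin N → Fin n → ℝ}
    (hv : ∀ g, suppCard (v g) ≤ r) {y : Fin n → ℝ} (hy : topEll2 r y ≤ 1) :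
    (∑ g, v g) ⬝ᵥ y ≤ ∑ g, euclN (v g) := by
  rw [sum_dotProduct]
  exact sum_le_sum fun g _ => (dotProduct_le_euclN_mul_topEll2 (hv g) y).trans
    (mul_le_of_le_one_right (euclN_nonneg _) hy)

/-- Taking one summand per admissible support, rather than an arbitrary finite family, makes this
set of decompositions convex and compact. -/
def sparseBall (r : ℕ) (s : ℝ) : Set (Fin n → ℝ) :=
  (fun b : {S : Finset (Fin n) // #S ≤ r} → Fin n → ℝ => ∑ S, b S) ''
    {b | (∀ S, ∀ i ∉ S.1, b S i = 0) ∧ ∑ S, euclN (b S) ≤ s}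

theorem convex_sparseBall (s : ℝ) : Convex ℝ (sparseBall (n := n) r s) := by
  refine Convex.is_linear_image ?_ ⟨fun b c => sum_add_distrib, fun c b => by simp [smul_sum]⟩
  intro b hb c hc a d ha hd had
  refine ⟨fun S i hi => by simp [hb.1 S i hi, hc.1 S i hi], ?_⟩
  calc ∑ S, euclN ((a • b + d • c) S) ≤ ∑ S, (a * euclN (b S) + d * euclN (c S)) :=
        sum_le_sum fun S _ => (euclN_add_le _ _).trans_eq <| by
          rw [Pi.smul_apply, Pi.smul_apply, euclN_smul, euclN_smul, abs_of_nonneg ha,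
            abs_of_nonneg hd]
    _ = a * ∑ S, euclN (b S) + d * ∑ S, euclN (c S) := by rw [sum_add_distrib, mul_sum, mul_sum]
    _ ≤ a * s + d * s := by gcongr; exacts [hb.2, hc.2]
    _ = s := by rw [← add_mul, had, one_mul]

theorem isCompact_sparseBall (s : ℝ) : IsCompact (sparseBall (n := n) r s) := by
  refine IsCompact.image (Metric.isCompact_of_isClosed_isBounded ?_ ?_)
    (continuous_finsetSum _ fun S _ => continuous_apply S)
  · have hsupp : IsClosed {b : {S : Finset (Fin n) // #S ≤ r} → Fin n → ℝ |
        ∀ S, ∀ i ∉ S.1, b S i = 0} := by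
      simp only [Set.ofPred_forall]
      exact isClosed_iInter fun S => isClosed_iInter fun i => isClosed_iInter fun _ =>
        isClosed_eq (by fun_prop) continuous_const
    exact hsupp.inter (isClosed_le (continuous_finsetSum _ fun S _ =>
      continuous_euclN.comp (continuous_apply S)) continuous_const)
  · refine (Metric.isBounded_closedBall (x := 0) (r := |s|)).subset fun b hb => ?_
    rw [Metric.mem_closedBall, dist_zero_right, pi_norm_le_iff_of_nonneg (abs_nonneg s)]
    refine fun S => (pi_norm_le_iff_of_nonneg (abs_nonneg s)).2 fun i => ?_
    calc ‖b S i‖ = |b S i| := Real.norm_eq_abs _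
      _ ≤ euclN (b S) := abs_le_euclN _ _
      _ ≤ ∑ S, euclN (b S) := single_le_sum (fun S _ => euclN_nonneg _) (mem_univ S)
      _ ≤ |s| := hb.2.trans (le_abs_self s)

theorem mem_sparseBall {v : Fin n → ℝ} {s : ℝ} (hv : suppCard v ≤ r) (hvs : euclN v ≤ s) :
    v ∈ sparseBall r s := by
  let S₀ : {S : Finset (Fin n) // #S ≤ r} := ⟨univ.filter fun i => v i ≠ 0, hv⟩
  refine ⟨Pi.single S₀ v, ⟨fun S i hi => ?_, ?_⟩, ?_⟩
  · rcases eq_or_ne S S₀ with rfl | hS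
    · simpa [S₀] using hi
    · simp [hS]
  · rwa [Fintype.sum_eq_single S₀ fun S hS => by simp [hS], Pi.single_eq_same]
  · simp

theorem ksup_le {k N : ℕ} {v : Fin N → Fin n → ℝ} (hv : ∀ g, suppCard (v g) ≤ k) :
    ksup k (∑ g, v g) ≤ ∑ g, euclN (v g) :=
  csInf_le ⟨0, by rintro _ ⟨N, v, -, -, rfl⟩; exact sum_nonneg fun g _ => euclN_nonneg _⟩
    ⟨N, v, hv, rfl, rfl⟩

theorem le_ksup {k : ℕ} {x : Fin n → ℝ} {c : ℝ} (hk : 1 ≤ k)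
    (h : ∀ N (v : Fin N → Fin n → ℝ), (∀ g, suppCard (v g) ≤ k) → ∑ g, v g = x →
      c ≤ ∑ g, euclN (v g)) :
    c ≤ ksup k x := by
  refine le_csInf ⟨_, n, fun i => Pi.single i (x i), fun i => ?_, univ_sum_single x, rfl⟩ ?_
  · exact (suppCard_le_card (S := {i}) fun j hj => Pi.single_eq_of_ne (by simpa using hj) _).trans
      (by simpa using hk)
  · rintro _ ⟨N, v, hv, hsum, rfl⟩
    exact h N v hv hsum

theorem ksup_le_of_mem_sparseBall {x : Fin n → ℝ} {s : ℝ} (hx : x ∈ sparseBall r s) :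
    ksup r x ≤ s := by
  obtain ⟨b, ⟨hsupp, hcost⟩, rfl⟩ := hx
  let e := (Fintype.equivFin {S : Finset (Fin n) // #S ≤ r}).symm
  calc ksup r (∑ S, b S) = ksup r (∑ g, b (e g)) := by rw [e.sum_comp b]
    _ ≤ ∑ g, euclN (b (e g)) := ksup_le fun g => (suppCard_le_card (hsupp _)).trans (e g).2
    _ = ∑ S, euclN (b S) := e.sum_comp fun S => euclN (b S)
    _ ≤ s := hcost

theorem dualVec_le {ν : (Fin n → ℝ) → ℝ} {x : Fin n → ℝ} {c : ℝ} (hν : ∃ y, ν y ≤ 1)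
    (h : ∀ y, ν y ≤ 1 → x ⬝ᵥ y ≤ c) : dualVec ν x ≤ c :=
  csSup_le (hν.elim fun y hy => ⟨_, y, hy, rfl⟩) (by rintro _ ⟨y, hy, rfl⟩; exact h y hy)

theorem le_dualVec {ν : (Fin n → ℝ) → ℝ} {x y : Fin n → ℝ} {c : ℝ}
    (h : ∀ y, ν y ≤ 1 → x ⬝ᵥ y ≤ c) (hy : ν y ≤ 1) : x ⬝ᵥ y ≤ dualVec ν x :=
  le_csSup ⟨c, by rintro _ ⟨y, hy, rfl⟩; exact h y hy⟩ ⟨y, hy, rfl⟩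

theorem exists_topEll2_le_one_lt_dotProduct (hr : r ≤ n) {s : ℝ} (hs : 0 < s) {x : Fin n → ℝ}
    (hx : x ∉ sparseBall r s) : ∃ y, topEll2 r y ≤ 1 ∧ s < x ⬝ᵥ y := by
  obtain ⟨f, u, hfu, hux⟩ := geometric_hahn_banach_closed_point (convex_sparseBall s)
    (isCompact_sparseBall s).isClosed hx
  set z : Fin n → ℝ := fun i => f (Pi.single i 1)
  have hf (w : Fin n → ℝ) : f w = w ⬝ᵥ z := by
    conv_lhs => rw [pi_eq_sum_univ' w]
    simp [z, dotProduct]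
  have hsv {v : Fin n → ℝ} (hv : suppCard v ≤ r) (hv1 : euclN v ≤ 1) : s * (v ⬝ᵥ z) < u := by
    rw [← smul_eq_mul, ← smul_dotProduct, ← hf]
    refine hfu _ (mem_sparseBall ((suppCard_le_card fun i hi => ?_).trans hv) ?_)
    · simp_all
    · rw [euclN_smul, abs_of_pos hs]
      exact mul_le_of_le_one_right hs.le hv1
  have hu : 0 < u := by simpa using hsv (v := 0) (by simp [suppCard]) (by simp)
  refine ⟨(s / u) • z, ?_, ?_⟩
  · obtain ⟨v, hv, hv1, hvz⟩ := exists_dotProduct_eq_topEll2 hr ((s / u) • z)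
    rw [← hvz, dotProduct_smul, smul_eq_mul, div_mul_eq_mul_div, div_le_one hu]
    exact (hsv hv hv1).le
  · rw [dotProduct_smul, smul_eq_mul, ← hf, div_mul_eq_mul_div, lt_div_iff₀ hu]
    exact mul_lt_mul_of_pos_left hux hs

end SparseDuality

/-- the dual norm of the `top-r ℓ²` norm is the `k`-support norm with `k = r`. -/
theorem dual_topEll2_eq_ksup {n r : ℕ} (hr1 : 1 ≤ r) (hr2 : r ≤ n) (x : Fin n → ℝ) :
    dualVec (topEll2 r) x = ksup r x := by
  have hweak : ∀ y, topEll2 r y ≤ 1 → x ⬝ᵥ y ≤ ksup r x := fun y hy =>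
    le_ksup hr1 fun N v hv hsum => hsum ▸ dotProduct_le_sum_euclN hv hy
  have hzero : topEll2 r (0 : Fin n → ℝ) ≤ 1 := by
    obtain ⟨v, -, -, hv⟩ := exists_dotProduct_eq_topEll2 hr2 (0 : Fin n → ℝ)
    rw [← hv, dotProduct_zero]
    exact zero_le_one
  refine le_antisymm (dualVec_le ⟨0, hzero⟩ hweak) (le_of_forall_gt_imp_ge_of_dense fun s hs => ?_)
  have hs0 : 0 < s := by simpa using (le_dualVec hweak hzero).trans_lt hs
  refine ksup_le_of_mem_sparseBall (by_contra fun hx => ?_)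
  obtain ⟨y, hy, hxy⟩ := exists_topEll2_le_one_lt_dotProduct hr2 hs0 hx
  exact (hxy.trans_le (le_dualVec hweak hy)).not_gt hs
end
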